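/- Let a, b, c, d be positive integers with b ≥ 2a, c > b, and d > c + b. Then in the partizan subtraction game with S_L = {a, b} and S_R = {c, d}, the outcome sequence is P^a L^{c−a} N^a L^{d−c−a} N^a L^∞; i.e., the outcome of n is P if n < a; N if c ≤ n < c+a or d ≤ n < d+a; and L otherwise (in particular L for all n ≥ d + a). -/
import Mathlib


mutual
def LeftFirstWins (SL SR : Finset ℕ) : ℕ → Prop
  | n => ∃ s ∈ SL, ∃ (_ : 0 < s) (_ : s ≤ n), ¬ RightFirstWins SL SR (n - s)
  termination_by n => n
  decreasing_by omega
def RightFirstWins (SL SR : Finset ℕ) : ℕ → Prop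
  | n => ∃ s ∈ SR, ∃ (_ : 0 < s) (_ : s ≤ n), ¬ LeftFirstWins SL SR (n - s)
  termination_by n => n
  decreasing_by omega
end

inductive Outcome | P | L | R | N
deriving DecidableEq

open Classical in
noncomputable def outcome (SL SR : Finset ℕ) (n : ℕ) : Outcome :=
  if LeftFirstWins SL SR n then
    if RightFirstWins SL SR n then .N else .L
  else
    if RightFirstWins SL SR n then .R else .P

theorem stmt_17 (a b c d : ℕ) (ha : 0 < a) (hba : 2 * a ≤ b) (hcb : b < c)
    (hdc : c + b < d) (n : ℕ) :
    (n < a → outcome {a, b} {c, d} n = .P) ∧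
    ((c ≤ n ∧ n < c + a) ∨ (d ≤ n ∧ n < d + a) → outcome {a, b} {c, d} n = .N) ∧
    (a ≤ n → ¬ ((c ≤ n ∧ n < c + a) ∨ (d ≤ n ∧ n < d + a)) →
      outcome {a, b} {c, d} n = .L) := by
  have key : ∀ n : ℕ, (LeftFirstWins {a, b} {c, d} n ↔ a ≤ n) ∧
      (RightFirstWins {a, b} {c, d} n ↔
        (c ≤ n ∧ n < c + a) ∨ (d ≤ n ∧ n < d + a)) := by
    intro n
    induction n using Nat.strong_induction_on with
    | _ n ih =>
      constructor
      · rw [LeftFirstWins]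
        simp only [Finset.mem_insert, Finset.mem_singleton]
        constructor
        · rintro ⟨s, hs, hs0, hsn, -⟩
          rcases hs with rfl | rfl <;> omega
        · intro han
          by_cases h1 : (c ≤ n - a ∧ n - a < c + a) ∨ (d ≤ n - a ∧ n - a < d + a)
          · refine ⟨b, Or.inr rfl, by omega, by omega, ?_⟩
            rw [(ih (n - b) (by omega)).2]
            omega
          · refine ⟨a, Or.inl rfl, ha, han, ?_⟩
            rw [(ih (n - a) (by omega)).2]
            omega
      · rw [RightFirstWins]
        simp only [Finset.mem_insert, Finset.mem_singleton]
        constructor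
        · rintro ⟨s, hs, hs0, hsn, h⟩
          rw [(ih (n - s) (by omega)).1] at h
          rcases hs with rfl | rfl <;> omega
        · intro h
          rcases h with ⟨h1, h2⟩ | ⟨h1, h2⟩
          · refine ⟨c, Or.inl rfl, by omega, h1, ?_⟩
            rw [(ih (n - c) (by omega)).1]
            omega
          · refine ⟨d, Or.inr rfl, by omega, h1, ?_⟩
            rw [(ih (n - d) (by omega)).1]
            omega
  obtain ⟨hL, hR⟩ := key n
  refine ⟨?_, ?_, ?_⟩
  · intro h
    rw [outcome, if_neg (by rw [hL]; omega), if_neg (by rw [hR]; omega)]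
  · intro h
    rw [outcome, if_pos (by rw [hL]; omega), if_pos (by rw [hR]; omega)]
  · intro h1 h2
    rw [outcome, if_pos (by rw [hL]; omega), if_neg (by rw [hR]; omega)]
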